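/- Let ψ : ℕ → ℝ be a nonnegative sequence with Σ_{k=1}^∞ k·ψ(k) < ∞, let β ∈ ℝ and n ∈ ℕ (n ≥ 1). Then for every function f in the class C^ψ_β L₁ one has ‖f − S_{n−1}(f;·)‖_C ≤ (1/π)·(Σ_{k=n}^∞ ψ(k))·E_n(f^ψ_β)_{L₁}. -/

import Mathlib

open MeasureTheory Real Filter

noncomputable section

/-- `T` is a real trigonometric polynomial of degree at most `m`. -/
def IsTrigPoly (m : ℕ) (T : ℝ → ℝ) : Prop :=
  ∃ a b : ℕ → ℝ, ∀ t : ℝ,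
    T t = a 0 + ∑ k ∈ Finset.Icc 1 m, (a k * Real.cos (k * t) + b k * Real.sin (k * t))

/-- The best approximation `E_n(g)_{L₁}` of `g` in the `L₁`-metric on `[0, 2π]`
by trigonometric polynomials of degree at most `n - 1`. -/
def bestL1 (n : ℕ) (g : ℝ → ℝ) : ℝ :=
  sInf {I : ℝ | ∃ T : ℝ → ℝ, IsTrigPoly (n - 1) T ∧
    I = ∫ t in (0 : ℝ)..(2 * π), |g t - T t|}

/-- The partial Fourier sum `S_m(f; x)` of order `m` of `f`. -/
def fourierSumR (m : ℕ) (f : ℝ → ℝ) (x : ℝ) : ℝ :=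
  (1 / (2 * π)) * (∫ t in (0 : ℝ)..(2 * π), f t) +
    ∑ k ∈ Finset.Icc 1 m,
      ((1 / π) * (∫ t in (0 : ℝ)..(2 * π), f t * Real.cos (k * t)) * Real.cos (k * x) +
        (1 / π) * (∫ t in (0 : ℝ)..(2 * π), f t * Real.sin (k * t)) * Real.sin (k * x))

/-- The kernel `Ψ_β(t) = Σ_{k=1}^∞ ψ(k) cos(k t - βπ/2)`. -/
def PsiKer (ψ : ℕ → ℝ) (β : ℝ) (t : ℝ) : ℝ :=
  ∑' k : ℕ, ψ (k + 1) * Real.cos (((k : ℝ) + 1) * t - β * π / 2)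

/-- `f` belongs to the class `C^ψ_β L₁`, with `(ψ,β)`-derivative `φ`. -/
def InClassL1 (ψ : ℕ → ℝ) (β : ℝ) (f φ : ℝ → ℝ) : Prop :=
  Continuous f ∧ (∀ x, f (x + 2 * π) = f x) ∧
    (∀ x, φ (x + 2 * π) = φ x) ∧
    IntervalIntegrable φ MeasureTheory.volume (-π) π ∧
    (∫ t in (-π)..π, φ t) = 0 ∧
    ∃ a₀ : ℝ, ∀ x, f x = a₀ / 2 + (1 / π) * ∫ t in (-π)..π, PsiKer ψ β (x - t) * φ t

/-- The uniform deviation `‖f - S_{n-1}(f;·)‖_C`. -/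
def dev (n : ℕ) (f : ℝ → ℝ) : ℝ :=
  ⨆ x : ℝ, |f x - fourierSumR (n - 1) f x|

/-- `𝓔_n(C^ψ_{β,1})_C := sup_{f ∈ C^ψ_{β,1}} ‖f - S_{n-1}(f;·)‖_C`. -/
def EnClass (ψ : ℕ → ℝ) (β : ℝ) (n : ℕ) : ℝ :=
  sSup {v : ℝ | ∃ f φ : ℝ → ℝ, InClassL1 ψ β f φ ∧
    (∫ t in (0 : ℝ)..(2 * π), |φ t|) ≤ 1 ∧ v = dev n f}

/-- The kernel `Ψ_{β,n}(t) = Σ_{k=n}^∞ ψ(k) cos(k t - βπ/2)`. -/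
def PsiKerN (ψ : ℕ → ℝ) (β : ℝ) (n : ℕ) (t : ℝ) : ℝ :=
  ∑' k : ℕ, ψ (k + n) * Real.cos (((k + n : ℕ) : ℝ) * t - β * π / 2)

/-! Expanding the kernel termwise writes `f = a₀/2 + (1/π) Σ_{k ≥ 1} ψ(k) c_k`, where
`c_k(x) = ∫ cos (k (x - s) - βπ/2) φ(s) ds` is a pure harmonic of order `k`. By orthogonality,
`S_{n-1} f` keeps exactly the terms with `k < n`. For `k ≥ n` the harmonic `c_k` does not change
when `φ` is replaced by `φ - T` with `T` a trigonometric polynomial of degree `< n`, so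
`|c_k(x)| ≤ ∫ |φ - T|`; summing over `k ≥ n` and taking the infimum over `T` gives the bound. -/

theorem integral_tsum_mul_eq_tsum_integral {a b : ℝ} {u : ℕ → ℝ → ℝ} {M : ℕ → ℝ} {g : ℝ → ℝ}
    (hu : ∀ k, Continuous (u k)) (hbound : ∀ k s, |u k s| ≤ M k) (hM : Summable M)
    (hg : IntervalIntegrable g volume a b) :
    ∫ s in a..b, (∑' k, u k s) * g s = ∑' k, ∫ s in a..b, u k s * g s := by
  refine (intervalIntegral.hasSum_integral_of_dominated_convergence
    (F := fun k s => u k s * g s) (f := fun s => (∑' k, u k s) * g s) (fun k s => M k * |g s|)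
    (fun k => (hu k).aestronglyMeasurable.mul hg.def'.aestronglyMeasurable)
    (fun k => .of_forall fun s _ => ?_) (.of_forall fun s _ => hM.mul_right _) ?_
    (.of_forall fun s _ => ?_)).tsum_eq.symm
  · rw [norm_mul, Real.norm_eq_abs, Real.norm_eq_abs]
    exact mul_le_mul_of_nonneg_right (hbound k s) (abs_nonneg _)
  · simp_rw [tsum_mul_right]
    exact hg.abs.const_mul _
  · have hsum : Summable fun k => u k s :=
      .of_norm_bounded hM fun k => (Real.norm_eq_abs _).trans_le (hbound k s)
    exact hsum.hasSum.mul_right _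

theorem summable_of_summable_natCast_mul {ψ : ℕ → ℝ} (hψ : Summable fun k : ℕ => (k : ℝ) * ψ k) :
    Summable ψ :=
  Summable.of_norm_bounded_eventually_nat hψ.abs <| eventually_atTop.mpr ⟨1, fun k hk => by
    rw [Real.norm_eq_abs, abs_mul, Nat.abs_cast]
    exact le_mul_of_one_le_left (abs_nonneg _) (by exact_mod_cast hk)⟩

theorem integral_cos_intCast_mul_add (c : ℤ) (θ : ℝ) :
    ∫ t in (0 : ℝ)..(2 * π), cos (c * t + θ) = if c = 0 then 2 * π * cos θ else 0 := by
  split_ifs with hc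
  · simp [hc]
  · have hc' : (c : ℝ) ≠ 0 := Int.cast_ne_zero.mpr hc
    rw [intervalIntegral.integral_comp_mul_add (fun t => cos t) hc', integral_cos, mul_zero,
      zero_add, add_comm, sin_add_int_mul_two_pi, sub_self, smul_zero]

theorem integral_sin_intCast_mul_add (c : ℤ) (θ : ℝ) :
    ∫ t in (0 : ℝ)..(2 * π), sin (c * t + θ) = if c = 0 then 2 * π * sin θ else 0 := by
  simp only [← cos_sub_pi_div_two, add_sub_assoc, integral_cos_intCast_mul_add]

theorem integral_cos_sub_natCast_mul {k : ℕ} (hk : k ≠ 0) (θ : ℝ) :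
    ∫ t in (0 : ℝ)..(2 * π), cos (θ - k * t) = 0 := by
  have h := integral_cos_intCast_mul_add (-k) θ
  rw [if_neg (by omega)] at h
  simpa only [Int.cast_neg, Int.cast_natCast, neg_mul, neg_add_eq_sub] using h

theorem integral_harmonic_mul_cos_sub {j : ℕ} (hj : j ≠ 0) (k : ℕ) (A B θ : ℝ) :
    ∫ t in (0 : ℝ)..(2 * π), (A * cos (j * t) + B * sin (j * t)) * cos (θ - k * t) =
      if j = k then π * (A * cos θ + B * sin θ) else 0 := by
  have product_to_sum : ∀ t : ℝ, (A * cos (j * t) + B * sin (j * t)) * cos (θ - k * t) =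
      A / 2 * cos (((j + k : ℤ) : ℝ) * t + -θ) + A / 2 * cos (((j - k : ℤ) : ℝ) * t + θ) +
      (B / 2 * sin (((j + k : ℤ) : ℝ) * t + -θ) + B / 2 * sin (((j - k : ℤ) : ℝ) * t + θ)) := by
    intro t
    push_cast
    simp only [add_mul, sub_mul, cos_add, cos_sub, sin_add, sin_sub, cos_neg, sin_neg]
    ring
  have hint : ∀ g : ℝ → ℝ, Continuous g → IntervalIntegrable g volume 0 (2 * π) :=
    fun g hg => hg.intervalIntegrable _ _
  simp_rw [product_to_sum]
  rw [intervalIntegral.integral_add (hint _ (by fun_prop)) (hint _ (by fun_prop)),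
    intervalIntegral.integral_add (hint _ (by fun_prop)) (hint _ (by fun_prop)),
    intervalIntegral.integral_add (hint _ (by fun_prop)) (hint _ (by fun_prop))]
  simp only [intervalIntegral.integral_const_mul, integral_cos_intCast_mul_add,
    integral_sin_intCast_mul_add]
  have hjk : (j + k : ℤ) ≠ 0 := by omega
  simp only [hjk, if_false]
  by_cases h : j = k
  · simp only [h, sub_self, if_true]; ring
  · have h' : (j - k : ℤ) ≠ 0 := by omega
    simp only [h, h', if_false]; ring

theorem periodic_cos_sub_natCast_mul (k : ℕ) (θ : ℝ) :
    Function.Periodic (fun t => cos (θ - k * t)) (2 * π) := fun t => by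
  simp only [mul_add, ← sub_sub, cos_sub_nat_mul_two_pi]

theorem abs_integral_mul_le_integral_abs {a b : ℝ} (hab : a ≤ b) {c g : ℝ → ℝ}
    (hc : ∀ s, |c s| ≤ 1) (hg : IntervalIntegrable g volume a b) :
    |∫ s in a..b, c s * g s| ≤ ∫ s in a..b, |g s| := by
  rw [← Real.norm_eq_abs]
  refine intervalIntegral.norm_integral_le_of_norm_le hab (.of_forall fun s _ => ?_) hg.abs
  rw [norm_mul, Real.norm_eq_abs, Real.norm_eq_abs]
  exact mul_le_of_le_one_left (abs_nonneg _) (hc s)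

theorem IsTrigPoly.continuous {m : ℕ} {T : ℝ → ℝ} (hT : IsTrigPoly m T) : Continuous T := by
  obtain ⟨a, b, hT⟩ := hT
  rw [funext hT]
  fun_prop

theorem IsTrigPoly.integral_mul_cos_sub_eq_zero {m k : ℕ} {T : ℝ → ℝ} (hT : IsTrigPoly m T)
    (hk : m < k) (θ : ℝ) : ∫ t in (0 : ℝ)..(2 * π), T t * cos (θ - k * t) = 0 := by
  obtain ⟨a, b, hT⟩ := hT
  have hint : ∀ g : ℝ → ℝ, Continuous g → IntervalIntegrable g volume 0 (2 * π) :=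
    fun g hg => hg.intervalIntegrable _ _
  simp_rw [hT, add_mul, Finset.sum_mul]
  rw [intervalIntegral.integral_add (hint _ (by fun_prop)) (hint _ (by fun_prop)),
    intervalIntegral.integral_finsetSum fun i _ => hint _ (by fun_prop),
    intervalIntegral.integral_const_mul, integral_cos_sub_natCast_mul (by omega), mul_zero,
    zero_add]
  refine Finset.sum_eq_zero fun i hi => ?_
  obtain ⟨hi₁, hi₂⟩ := Finset.mem_Icc.mp hi
  rw [integral_harmonic_mul_cos_sub (by omega), if_neg (by omega)]

theorem le_mul_bestL1 {a c : ℝ} {n : ℕ} {φ : ℝ → ℝ} (hc : 0 ≤ c)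
    (h : ∀ T, IsTrigPoly (n - 1) T → a ≤ c * ∫ t in (0 : ℝ)..(2 * π), |φ t - T t|) :
    a ≤ c * bestL1 n φ := by
  have hzero : IsTrigPoly (n - 1) 0 := ⟨0, 0, by simp⟩
  rw [bestL1, ← smul_eq_mul, ← Real.sInf_smul_of_nonneg hc]
  refine le_csInf ⟨_, Set.smul_mem_smul_set ⟨0, hzero, rfl⟩⟩ ?_
  rintro _ ⟨_, ⟨T, hT, rfl⟩, rfl⟩
  exact h T hT

theorem fourierSumR_eq_sum_integral_mul_cos_sub {f : ℝ → ℝ}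
    (hf : IntervalIntegrable f volume 0 (2 * π)) (m : ℕ) (x : ℝ) :
    fourierSumR m f x = 1 / (2 * π) * (∫ t in (0 : ℝ)..(2 * π), f t) +
      1 / π * ∑ k ∈ Finset.Icc 1 m, ∫ t in (0 : ℝ)..(2 * π), f t * cos (k * x - k * t) := by
  rw [fourierSumR, Finset.mul_sum]
  congr 1
  refine Finset.sum_congr rfl fun k _ => ?_
  have expand : ∀ t, f t * cos (k * x - k * t) =
      cos (k * x) * (f t * cos (k * t)) + sin (k * x) * (f t * sin (k * t)) := fun t => by
    rw [cos_sub]; ring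
  have hint : ∀ c : ℝ → ℝ, Continuous c →
      IntervalIntegrable (fun t => f t * c t) volume 0 (2 * π) :=
    fun c hc => hf.mul_continuousOn hc.continuousOn
  rw [intervalIntegral.integral_congr fun t _ => expand t,
    intervalIntegral.integral_add ((hint _ (by fun_prop)).const_mul _)
      ((hint _ (by fun_prop)).const_mul _),
    intervalIntegral.integral_const_mul, intervalIntegral.integral_const_mul]
  ring

def cosConv (β : ℝ) (φ : ℝ → ℝ) (k : ℕ) (x : ℝ) : ℝ :=
  ∫ s in (-π)..π, cos (k * (x - s) - β * π / 2) * φ s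

section cosConv

variable {β : ℝ} {φ : ℝ → ℝ}

theorem cosConv_eq_harmonic (hφ : IntervalIntegrable φ volume (-π) π) (k : ℕ) :
    ∃ A B : ℝ, ∀ x, cosConv β φ k x = A * cos (k * x) + B * sin (k * x) := by
  refine ⟨∫ s in (-π)..π, cos (k * s + β * π / 2) * φ s,
    ∫ s in (-π)..π, sin (k * s + β * π / 2) * φ s, fun x => ?_⟩
  have expand : ∀ s, cos (k * (x - s) - β * π / 2) * φ s =
      cos (k * x) * (cos (k * s + β * π / 2) * φ s) +
        sin (k * x) * (sin (k * s + β * π / 2) * φ s) := fun s => by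
    rw [show k * (x - s) - β * π / 2 = k * x - (k * s + β * π / 2) by ring, cos_sub]
    ring
  have hint : ∀ c : ℝ → ℝ, Continuous c → IntervalIntegrable (fun s => c s * φ s) volume (-π) π :=
    fun c hc => hφ.continuousOn_mul hc.continuousOn
  rw [cosConv, intervalIntegral.integral_congr fun s _ => expand s,
    intervalIntegral.integral_add ((hint _ (by fun_prop)).const_mul _)
      ((hint _ (by fun_prop)).const_mul _),
    intervalIntegral.integral_const_mul, intervalIntegral.integral_const_mul]
  ring

theorem continuous_cosConv (hφ : IntervalIntegrable φ volume (-π) π) (k : ℕ) :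
    Continuous (cosConv β φ k) := by
  obtain ⟨A, B, hAB⟩ := cosConv_eq_harmonic (β := β) hφ k
  rw [funext hAB]
  fun_prop

theorem abs_cosConv_le (hφ : IntervalIntegrable φ volume (-π) π) (k : ℕ) (x : ℝ) :
    |cosConv β φ k x| ≤ ∫ s in (-π)..π, |φ s| :=
  abs_integral_mul_le_integral_abs (by linarith [pi_pos]) (fun _ => abs_cos_le_one _) hφ

theorem integral_cosConv_mul_cos_sub (hφ : IntervalIntegrable φ volume (-π) π) {j : ℕ}
    (hj : j ≠ 0) (k : ℕ) (x : ℝ) :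
    ∫ t in (0 : ℝ)..(2 * π), cosConv β φ j t * cos (k * x - k * t) =
      if j = k then π * cosConv β φ j x else 0 := by
  obtain ⟨A, B, hAB⟩ := cosConv_eq_harmonic (β := β) hφ j
  simp_rw [hAB, integral_harmonic_mul_cos_sub hj]
  split_ifs with h
  · rw [h]
  · rfl

theorem abs_cosConv_le_integral_abs_sub (hφper : Function.Periodic φ (2 * π))
    (hφ : IntervalIntegrable φ volume (-π) π) {m k : ℕ} {T : ℝ → ℝ} (hT : IsTrigPoly m T)
    (hk : m < k) (x : ℝ) :
    |cosConv β φ k x| ≤ ∫ t in (0 : ℝ)..(2 * π), |φ t - T t| := by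
  have hφ' : IntervalIntegrable φ volume 0 (2 * π) :=
    hφper.intervalIntegrable two_pi_pos.ne' (t := -π) (by rwa [show -π + 2 * π = π by ring]) _ _
  have hTc := hT.continuous
  have shift : cosConv β φ k x =
      ∫ t in (0 : ℝ)..(2 * π), cos (k * x - β * π / 2 - k * t) * φ t := by
    have h := ((periodic_cos_sub_natCast_mul k (k * x - β * π / 2)).mul
      hφper).intervalIntegral_add_eq (-π) 0
    simp only [show -π + 2 * π = π by ring, zero_add, Pi.mul_apply] at h
    rw [cosConv, ← h]
    congr 1 with t
    ring_nf
  have subtract : ∫ t in (0 : ℝ)..(2 * π), cos (k * x - β * π / 2 - k * t) * φ t =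
      ∫ t in (0 : ℝ)..(2 * π), cos (k * x - β * π / 2 - k * t) * (φ t - T t) := by
    have hφcos : IntervalIntegrable (fun t => cos (k * x - β * π / 2 - k * t) * φ t) volume 0
        (2 * π) := hφ'.continuousOn_mul (by fun_prop)
    have hTcos : IntervalIntegrable (fun t => cos (k * x - β * π / 2 - k * t) * T t) volume 0
        (2 * π) := (by fun_prop : Continuous _).intervalIntegrable _ _
    simp_rw [mul_sub]
    rw [intervalIntegral.integral_sub hφcos hTcos]
    simp_rw [mul_comm (cos _) (T _), hT.integral_mul_cos_sub_eq_zero hk, sub_zero]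
  rw [shift, subtract]
  exact abs_integral_mul_le_integral_abs two_pi_pos.le (fun _ => abs_cos_le_one _)
    (hφ'.sub (hTc.intervalIntegrable _ _))

end cosConv

def psiIntegral (ψ : ℕ → ℝ) (β : ℝ) (φ : ℝ → ℝ) (x : ℝ) : ℝ :=
  ∑' j, ψ (j + 1) * cosConv β φ (j + 1) x

section psiIntegral

variable {ψ : ℕ → ℝ} {β : ℝ} {φ : ℝ → ℝ}

theorem abs_mul_cosConv_le (hφ : IntervalIntegrable φ volume (-π) π) (k : ℕ) (x : ℝ) :
    |ψ k * cosConv β φ k x| ≤ |ψ k| * ∫ s in (-π)..π, |φ s| := by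
  rw [abs_mul]
  exact mul_le_mul_of_nonneg_left (abs_cosConv_le hφ k x) (abs_nonneg _)

theorem integral_psiKer_mul_eq_psiIntegral (hψ : Summable ψ)
    (hφ : IntervalIntegrable φ volume (-π) π) (x : ℝ) :
    ∫ s in (-π)..π, PsiKer ψ β (x - s) * φ s = psiIntegral ψ β φ x := by
  have hψ₁ : Summable fun j => |ψ (j + 1)| := (summable_nat_add_iff 1).mpr hψ.abs
  simp only [PsiKer]
  rw [integral_tsum_mul_eq_tsum_integral (fun _ => by fun_prop) (fun _ _ => ?_) hψ₁ hφ]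
  · refine tsum_congr fun j => ?_
    rw [cosConv, ← intervalIntegral.integral_const_mul]
    push_cast
    simp only [mul_assoc]
  · rw [abs_mul]
    exact mul_le_of_le_one_right (abs_nonneg _) (abs_cos_le_one _)

theorem continuous_psiIntegral (hψ : Summable ψ) (hφ : IntervalIntegrable φ volume (-π) π) :
    Continuous (psiIntegral ψ β φ) :=
  continuous_tsum (fun _ => (continuous_cosConv hφ _).const_mul _)
    (((summable_nat_add_iff 1).mpr hψ.abs).mul_right _) fun _ x => abs_mul_cosConv_le hφ _ x

theorem integral_psiIntegral_mul_cos_sub (hψ : Summable ψ)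
    (hφ : IntervalIntegrable φ volume (-π) π) (k : ℕ) (x : ℝ) :
    ∫ t in (0 : ℝ)..(2 * π), psiIntegral ψ β φ t * cos (k * x - k * t) =
      if k = 0 then 0 else π * (ψ k * cosConv β φ k x) := by
  have hψ₁ : Summable fun j => |ψ (j + 1)| := (summable_nat_add_iff 1).mpr hψ.abs
  simp only [psiIntegral]
  rw [integral_tsum_mul_eq_tsum_integral (fun _ => (continuous_cosConv hφ _).const_mul _)
    (fun j t => abs_mul_cosConv_le hφ (j + 1) t) (hψ₁.mul_right _)
    ((by fun_prop : Continuous _).intervalIntegrable _ _)]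
  simp_rw [mul_assoc, intervalIntegral.integral_const_mul,
    integral_cosConv_mul_cos_sub hφ (Nat.succ_ne_zero _)]
  cases k with
  | zero => simp
  | succ k => simp [mul_left_comm]

theorem fourierSumR_const_add_psiIntegral (hψ : Summable ψ)
    (hφ : IntervalIntegrable φ volume (-π) π) (a₀ : ℝ) (m : ℕ) (x : ℝ) :
    fourierSumR m (fun t => a₀ / 2 + 1 / π * psiIntegral ψ β φ t) x =
      a₀ / 2 + 1 / π * ∑ j ∈ Finset.range m, ψ (j + 1) * cosConv β φ (j + 1) x := by
  have hcont := continuous_psiIntegral (β := β) hψ hφ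
  have coeff : ∀ k : ℕ, ∫ t in (0 : ℝ)..(2 * π), (a₀ / 2 + 1 / π * psiIntegral ψ β φ t) *
      cos (k * x - k * t) =
      a₀ / 2 * (∫ t in (0 : ℝ)..(2 * π), cos (k * x - k * t)) +
        1 / π * (if k = 0 then 0 else π * (ψ k * cosConv β φ k x)) := by
    intro k
    simp_rw [add_mul, mul_assoc]
    rw [intervalIntegral.integral_add ((by fun_prop : Continuous _).intervalIntegrable _ _)
        ((by fun_prop : Continuous _).intervalIntegrable _ _),
      intervalIntegral.integral_const_mul, intervalIntegral.integral_const_mul,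
      integral_psiIntegral_mul_cos_sub hψ hφ]
  have mean : ∫ t in (0 : ℝ)..(2 * π), (a₀ / 2 + 1 / π * psiIntegral ψ β φ t) = π * a₀ := by
    have h := coeff 0
    simp only [CharP.cast_eq_zero, zero_mul, sub_zero, cos_zero, mul_one, ↓reduceIte] at h
    rw [h, intervalIntegral.integral_const, smul_eq_mul]
    ring
  have harmonic : ∀ k ∈ Finset.Icc 1 m, ∫ t in (0 : ℝ)..(2 * π),
      (a₀ / 2 + 1 / π * psiIntegral ψ β φ t) * cos (k * x - k * t) = ψ k * cosConv β φ k x := by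
    intro k hk
    have hk : k ≠ 0 := by simp at hk; omega
    rw [coeff, integral_cos_sub_natCast_mul hk, if_neg hk]
    field_simp
    ring
  rw [fourierSumR_eq_sum_integral_mul_cos_sub ((by fun_prop : Continuous _).intervalIntegrable _ _),
    mean, Finset.sum_congr rfl harmonic, Finset.range_eq_Ico,
    Finset.sum_Ico_add' (fun k => ψ k * cosConv β φ k x), zero_add,
    ← Finset.Ico_add_one_right_eq_Icc]
  field_simp

theorem const_add_psiIntegral_sub_fourierSumR (hψ : Summable ψ)
    (hφ : IntervalIntegrable φ volume (-π) π) (a₀ : ℝ) (m : ℕ) (x : ℝ) :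
    a₀ / 2 + 1 / π * psiIntegral ψ β φ x -
        fourierSumR m (fun t => a₀ / 2 + 1 / π * psiIntegral ψ β φ t) x =
      1 / π * ∑' j, ψ (j + (m + 1)) * cosConv β φ (j + (m + 1)) x := by
  have hsum : Summable fun j => ψ (j + 1) * cosConv β φ (j + 1) x :=
    Summable.of_norm_bounded (((summable_nat_add_iff 1).mpr hψ.abs).mul_right _)
      fun j => (Real.norm_eq_abs _).trans_le (abs_mul_cosConv_le hφ (j + 1) x)
  rw [fourierSumR_const_add_psiIntegral hψ hφ, psiIntegral, ← hsum.sum_add_tsum_nat_add m]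
  simp only [add_assoc, add_sub_add_left_eq_sub, ← mul_sub, add_sub_cancel_left]

end psiIntegral

theorem lebesgue_type_upper_bound (ψ : ℕ → ℝ) (hψ : ∀ k, 0 ≤ ψ k)
    (hsum : Summable (fun k : ℕ => (k : ℝ) * ψ k)) (β : ℝ) (n : ℕ) (hn : 1 ≤ n)
    (f φ : ℝ → ℝ) (hf : InClassL1 ψ β f φ) :
    dev n f ≤ (1 / π) * (∑' k : ℕ, ψ (k + n)) * bestL1 n φ := by
  obtain ⟨-, -, hφper, hφ, -, a₀, hrep⟩ := hf
  obtain ⟨m, rfl⟩ := Nat.exists_eq_add_of_le' hn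
  have hψsum : Summable ψ := summable_of_summable_natCast_mul hsum
  obtain rfl : f = fun x => a₀ / 2 + 1 / π * psiIntegral ψ β φ x :=
    funext fun x => by rw [hrep, integral_psiKer_mul_eq_psiIntegral hψsum hφ]
  have hψtail : Summable fun k => ψ (k + (m + 1)) := (summable_nat_add_iff _).mpr hψsum
  refine le_mul_bestL1 (mul_nonneg (by positivity) (tsum_nonneg fun k => hψ _)) fun T hT =>
    ciSup_le fun x => ?_
  have termwise : ∀ k, ‖ψ (k + (m + 1)) * cosConv β φ (k + (m + 1)) x‖ ≤
      ψ (k + (m + 1)) * ∫ t in (0 : ℝ)..(2 * π), |φ t - T t| := fun k => by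
    rw [Real.norm_eq_abs, abs_mul, abs_of_nonneg (hψ _)]
    exact mul_le_mul_of_nonneg_left
      (abs_cosConv_le_integral_abs_sub hφper hφ hT (by omega) x) (hψ _)
  rw [Nat.add_sub_cancel, const_add_psiIntegral_sub_fourierSumR hψsum hφ, abs_mul,
    abs_of_pos (by positivity), mul_assoc, ← tsum_mul_right, ← Real.norm_eq_abs]
  gcongr
  exact tsum_of_norm_bounded (hψtail.mul_right _).hasSum termwise
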